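/- arXiv:2101.09377 — 3 statements merged into one kernel-verified Lean document; each statement's English description precedes it below -/
import Mathlib

section
/- In a finite-dimensional Lie algebra over a field of characteristic zero, the nilnegative part of an sl2-triple is unique: if (h,e,f) and (h,e,f') both satisfy the sl2 bracket relations ⁅h,e⁆ = 2e, ⁅h,f⁆ = -2f, ⁅e,f⁆ = h (and likewise with f'), then f = f'. -/
/-- Uniqueness of the nilnegative element of an sl2-triple in a
finite-dimensional Lie algebra over a field of characteristic zero. -/
theorem stmt_0 {k L : Type*} [Field k] [CharZero k] [LieRing L] [LieAlgebra k L]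
    [Module.Finite k L] (h e f f' : L)
    (hhe : ⁅h, e⁆ = (2 : k) • e)
    (hhf : ⁅h, f⁆ = (-2 : k) • f) (hef : ⁅e, f⁆ = h)
    (hhf' : ⁅h, f'⁆ = (-2 : k) • f') (hef' : ⁅e, f'⁆ = h) :
    f = f' := by
  by_cases hh : h = 0
  · subst hh
    have hf0 : f = 0 := by
      have := hhf
      rwa [zero_lie, eq_comm, smul_eq_zero_iff_right (by norm_num : (-2 : k) ≠ 0)] at this
    have hf0' : f' = 0 := by
      have := hhf'
      rwa [zero_lie, eq_comm, smul_eq_zero_iff_right (by norm_num : (-2 : k) ≠ 0)] at this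
    rw [hf0, hf0']
  · have t : IsSl2Triple h e f :=
      ⟨hh, hef, by rw [hhe, two_smul, two_smul], by rw [hhf, neg_smul, two_smul, two_smul]⟩
    by_contra hne
    have hg : f - f' ≠ 0 := sub_ne_zero.mpr hne
    have P : t.HasPrimitiveVectorWith (M := L) (f - f') (-2 : k) :=
      { ne_zero := hg
        lie_h := by rw [lie_sub, hhf, hhf', smul_sub]
        lie_e := by rw [lie_sub, hef, hef', sub_self] }
    obtain ⟨n, hn⟩ := P.exists_nat
    have : ((-2 : ℤ) : k) = ((n : ℤ) : k) := by push_cast; exact_mod_cast hn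
    have := Int.cast_injective (α := k) this
    omega
end

section
/- Let (h,e,f) be an sl2-triple acting on a finite-dimensional Lie module M over a field of characteristic zero. For every natural number n, the action of e maps the n-eigenspace of h onto the (n+2)-eigenspace of h; that is, for every w ∈ M with h⋅w = (n+2)·w there exists v ∈ M with h⋅v = n·v and e⋅v = w. -/
open LieModule

/-- For an sl2-triple acting on a finite-dimensional module over a field of
characteristic zero, e maps the n-eigenspace of h onto the (n+2)-eigenspace. -/
theorem stmt_8 {k L M : Type*} [Field k] [CharZero k] [LieRing L] [LieAlgebra k L]
    [AddCommGroup M] [Module k M] [LieRingModule L M] [LieModule k L M]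
    [Module.Finite k M]
    (h e f : L)
    (hhe : ⁅h, e⁆ = (2 : k) • e) (hhf : ⁅h, f⁆ = (-2 : k) • f) (hef : ⁅e, f⁆ = h)
    (n : ℕ) :
    ∀ w : M, ⁅h, w⁆ = ((n : k) + 2) • w →
      ∃ v : M, ⁅h, v⁆ = (n : k) • v ∧ ⁅e, v⁆ = w := by
  intro w hw
  have hn2 : ((n : k) + 2) ≠ 0 := by
    have : ((n + 2 : ℤ) : k) ≠ 0 := Int.cast_ne_zero.mpr (by omega)
    push_cast at this
    exact this
  -- Degenerate case `h = 0`.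
  rcases eq_or_ne h 0 with rfl | hh0
  · have hw0 : w = 0 := by
      rw [zero_lie] at hw
      rcases (smul_eq_zero.mp hw.symm) with h1 | h1
      · exact absurd h1 hn2
      · exact h1
    exact ⟨0, by simp, by simp [hw0]⟩
  have t : IsSl2Triple h e f :=
    { h_ne_zero := hh0
      lie_e_f := hef
      lie_h_e_nsmul := by rw [hhe, ← Nat.cast_smul_eq_nsmul k]; norm_num
      lie_h_f_nsmul := by
        rw [hhf, ← Nat.cast_smul_eq_nsmul k, neg_smul]; norm_num }
  set E : Module.End k M := toEnd k L M e with hE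
  set F : Module.End k M := toEnd k L M f with hF
  -- Lemma A : weights under powers of `E`.
  have lemA : ∀ (μ : k) (x : M), ⁅h, x⁆ = μ • x →
      ∀ j : ℕ, ⁅h, (E ^ j) x⁆ = (μ + 2 * j) • (E ^ j) x := by
    intro μ x hx j
    induction j with
    | zero => simpa using hx
    | succ j ih =>
      have hEj : (E ^ (j + 1)) x = ⁅e, (E ^ j) x⁆ := by
        rw [pow_succ', Module.End.mul_apply]; simp [hE]
      rw [hEj, leibniz_lie, hhe, smul_lie, ih, lie_smul, ← add_smul]
      congr 1
      push_cast
      ring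
  -- Lemma B : some power of `E` kills `w`.
  have lemB : ∃ m : ℕ, (E ^ m) w = 0 := by
    by_contra! contra
    have hinj : Function.Injective (fun j : ℕ => (n : k) + 2 + 2 * j) := by
      intro i j hij
      have h2 : (2 : k) * i = 2 * j := by
        simpa using congrArg (fun z => z - ((n : k) + 2)) hij
      have : (i : k) = j := mul_left_cancel₀ two_ne_zero h2
      exact_mod_cast this
    have hli := (toEnd k L M h).eigenvectors_linearIndependent'
      (fun j : ℕ => (n : k) + 2 + 2 * j) hinj (fun j => (E ^ j) w)
      (fun j => by
        rw [Module.End.hasEigenvector_iff, Module.End.mem_eigenspace_iff]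
        exact ⟨by simpa using lemA _ w hw j, contra j⟩)
    exact (not_finite_iff_infinite.mpr inferInstance) hli.finite
  -- Main induction.
  suffices Q : ∀ m : ℕ, ∀ w : M, ⁅h, w⁆ = ((n : k) + 2) • w → (E ^ m) w = 0 →
      ∃ v : M, ⁅h, v⁆ = (n : k) • v ∧ ⁅e, v⁆ = w by
    obtain ⟨m, hm⟩ := lemB
    exact Q m w hw hm
  intro m
  induction m with
  | zero =>
    intro w hw hw0
    simp only [pow_zero, Module.End.one_apply] at hw0
    exact ⟨0, by simp, by simp [hw0]⟩
  | succ m ih =>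
    intro w hw hw1
    by_cases hm : (E ^ m) w = 0
    · exact ih w hw hm
    set x : M := (E ^ m) w with hx
    set μ : k := (n : k) + 2 + 2 * m with hμ
    have P : t.HasPrimitiveVectorWith x μ :=
      { ne_zero := hm
        lie_h := by simpa using lemA _ w hw m
        lie_e := by
          have : (E ^ (m + 1)) w = ⁅e, x⁆ := by
            rw [pow_succ', Module.End.mul_apply]; simp [hE, hx]
          rw [← this, hw1] }
    -- nonvanishing of `μ - j` for `j ≤ m + 1`
    have hμj : ∀ j : ℕ, j ≤ m + 1 → μ - j ≠ 0 := by
      intro j hj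
      have : ((n + 2 + 2 * m - j : ℤ) : k) ≠ 0 := Int.cast_ne_zero.mpr (by omega)
      push_cast at this
      rw [hμ]
      intro hcon
      exact this (by linear_combination hcon)
    -- Claim C : `E^j (F^j x)` is a nonzero multiple of `x`.
    have lemC : ∀ j : ℕ, j ≤ m → ∃ c : k, c ≠ 0 ∧ (E ^ j) ((F ^ j) x) = c • x := by
      intro j hj
      induction j with
      | zero => exact ⟨1, one_ne_zero, by simp⟩
      | succ j ihj =>
        obtain ⟨c, hc, hcx⟩ := ihj (Nat.le_of_succ_le hj)
        have key : ⁅e, (F ^ (j + 1)) x⁆ = (((j : k) + 1) * (μ - j)) • (F ^ j) x := by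
          simpa using P.lie_e_pow_succ_toEnd_f j
        have hstep : (E ^ (j + 1)) ((F ^ (j + 1)) x)
            = (((j : k) + 1) * (μ - j)) • ((E ^ j) ((F ^ j) x)) := by
          rw [pow_succ, Module.End.mul_apply]
          have : E ((F ^ (j + 1)) x) = ⁅e, (F ^ (j + 1)) x⁆ := by simp [hE]
          rw [this, key, map_smul]
        refine ⟨((j : k) + 1) * (μ - j) * c, ?_, ?_⟩
        · have hj1 : ((j : k) + 1) ≠ 0 := by
            have : ((j + 1 : ℤ) : k) ≠ 0 := Int.cast_ne_zero.mpr (by omega)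
            push_cast at this; exact this
          exact mul_ne_zero (mul_ne_zero hj1 (hμj j (by omega))) hc
        · rw [hstep, hcx, smul_smul]
    obtain ⟨c, hc, hcx⟩ := lemC m le_rfl
    set d : k := ((m : k) + 1) * (μ - m) with hd'
    have hd : d ≠ 0 := by
      have hm1 : ((m : k) + 1) ≠ 0 := by
        have : ((m + 1 : ℤ) : k) ≠ 0 := Int.cast_ne_zero.mpr (by omega)
        push_cast at this; exact this
      exact mul_ne_zero hm1 (hμj m (by omega))
    have keyd : ⁅e, (F ^ (m + 1)) x⁆ = d • (F ^ m) x := by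
      simpa [hd'] using P.lie_e_pow_succ_toEnd_f m
    -- weight computations for powers of F applied to x
    have hwFm : ⁅h, (F ^ m) x⁆ = ((n : k) + 2) • (F ^ m) x := by
      have := P.lie_h_pow_toEnd_f m
      rw [show (μ - 2 * m) = (n : k) + 2 by rw [hμ]; ring] at this
      simpa using this
    have hwFm1 : ⁅h, (F ^ (m + 1)) x⁆ = (n : k) • (F ^ (m + 1)) x := by
      have := P.lie_h_pow_toEnd_f (m + 1)
      rw [show (μ - 2 * (↑(m + 1) : k)) = (n : k) by rw [hμ]; push_cast; ring] at this
      simpa using this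
    -- the corrected vector
    set w' : M := w - c⁻¹ • (F ^ m) x with hw'
    have hww' : ⁅h, w'⁆ = ((n : k) + 2) • w' := by
      rw [hw', lie_sub, lie_smul, hw, hwFm, smul_sub, smul_smul, smul_smul, mul_comm]
    have hEw' : (E ^ m) w' = 0 := by
      rw [hw', map_sub, map_smul, hcx, ← hx, smul_smul, inv_mul_cancel₀ hc, one_smul,
        sub_self]
    obtain ⟨v', hv'h, hv'e⟩ := ih w' hww' hEw'
    refine ⟨v' + (c⁻¹ * d⁻¹) • (F ^ (m + 1)) x, ?_, ?_⟩
    · rw [lie_add, lie_smul, hv'h, hwFm1]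
      module
    · rw [lie_add, lie_smul, hv'e, keyd, smul_smul, mul_assoc, inv_mul_cancel₀ hd,
        mul_one, hw']
      abel
end

section
/- Let V be a finite-dimensional vector space over a field with a nondegenerate symmetric bilinear form B, and let V = H ⊕ M be a direct sum decomposition with H and M orthogonal with respect to B. Suppose T : V → V is a linear map which is skew-adjoint for B (B(Tx,y) = -B(x,Ty) for all x,y) and exchanges the summands: T(H) ⊆ M and T(M) ⊆ H. Then dim(ker T ∩ H) = ½·(dim(ker T) + dim H − dim M). -/
/-!
Since `T` is skew, `(T H)^⊥ = T⁻¹(H^⊥) = T⁻¹(M)`, and because `T` exchanges the summands this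
preimage is `H ⊕ (ker T ∩ M)`. Nondegeneracy gives `dim T(H) + dim H + dim (ker T ∩ M) = dim V`,
rank–nullity on `H` gives `dim T(H) + dim (ker T ∩ H) = dim H`, and `ker T` splits as
`(ker T ∩ H) ⊕ (ker T ∩ M)`; eliminating `dim T(H)` yields the formula.
-/

namespace Submodule

section Ring

variable {R V : Type*} [Ring R] [AddCommGroup V] [Module R V]
  {H M : Submodule R V} {T : V →ₗ[R] V}

theorem comap_eq_sup_ker_inf_of_isCompl (hcompl : IsCompl H M)
    (hTH : ∀ h ∈ H, T h ∈ M) (hTM : ∀ m ∈ M, T m ∈ H) :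
    M.comap T = H ⊔ (LinearMap.ker T ⊓ M) := by
  refine le_antisymm (fun v hv => ?_) (sup_le hTH fun m hm => ?_)
  · obtain ⟨h, m, hh, hm, rfl⟩ := codisjoint_iff_exists_add_eq.mp hcompl.codisjoint v
    have hTm : T m ∈ H ⊓ M := by
      refine ⟨hTM m hm, ?_⟩
      simpa using M.sub_mem (mem_comap.mp hv) (hTH h hh)
    rw [hcompl.inf_eq_bot, mem_bot] at hTm
    exact add_mem_sup hh ⟨hTm, hm⟩
  · simp [LinearMap.mem_ker.mp hm.1]

theorem ker_eq_inf_sup_inf_of_isCompl (hcompl : IsCompl H M)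
    (hTH : ∀ h ∈ H, T h ∈ M) (hTM : ∀ m ∈ M, T m ∈ H) :
    LinearMap.ker T = (LinearMap.ker T ⊓ H) ⊔ (LinearMap.ker T ⊓ M) := by
  have hker : LinearMap.ker T ≤ M.comap T := LinearMap.ker_le_comap T
  rw [comap_eq_sup_ker_inf_of_isCompl hcompl hTH hTM] at hker
  calc LinearMap.ker T = LinearMap.ker T ⊓ (H ⊔ (LinearMap.ker T ⊓ M)) :=
        (inf_eq_left.mpr hker).symm
    _ = _ := (inf_sup_assoc_of_le H inf_le_left).symm

end Ring

section Field

open Module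

variable {K V W : Type*} [Field K] [AddCommGroup V] [Module K V] [AddCommGroup W] [Module K W]
  [FiniteDimensional K V]

theorem finrank_sup_of_disjoint {s t : Submodule K V} (h : Disjoint s t) :
    finrank K ↥(s ⊔ t) = finrank K s + finrank K t := by
  rw [← finrank_sup_add_finrank_inf_eq, h.eq_bot, finrank_bot, add_zero]

theorem finrank_map_add_finrank_ker_inf (f : V →ₗ[K] W) (p : Submodule K V) :
    finrank K ↥(p.map f) + finrank K ↥(LinearMap.ker f ⊓ p) = finrank K p := by
  have h := (f.domRestrict p).finrank_range_add_finrank_ker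
  rwa [LinearMap.range_domRestrict, LinearMap.ker_domRestrict, ← finrank_map_subtype_eq,
    map_comap_subtype, inf_comm] at h

end Field

end Submodule

namespace LinearMap.BilinForm

theorem orthogonal_map_eq_comap_orthogonal {R M : Type*} [CommRing R] [AddCommGroup M]
    [Module R M] {B : LinearMap.BilinForm R M} {f g : M →ₗ[R] M} (hfg : LinearMap.IsAdjointPair B B f g)
    (N : Submodule R M) : B.orthogonal (N.map f) = (B.orthogonal N).comap g := by
  ext v
  simp [mem_orthogonal_iff, hfg _ v]

theorem orthogonal_eq_of_isCompl {K V : Type*} [Field K] [AddCommGroup V] [Module K V]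
    [FiniteDimensional K V] {B : LinearMap.BilinForm K V} (hB : B.Nondegenerate)
    {H M : Submodule K V} (hcompl : IsCompl H M) (horth : ∀ h ∈ H, ∀ m ∈ M, B h m = 0) :
    B.orthogonal H = M := by
  have hle : M ≤ B.orthogonal H := fun m hm h hh => horth h hh m hm
  refine (Submodule.eq_of_le_of_finrank_eq hle ?_).symm
  rw [finrank_orthogonal hB, ← Submodule.finrank_add_eq_of_isCompl hcompl]
  omega

end LinearMap.BilinForm

open Module Submodule LinearMap.BilinForm in
theorem stmt_13_general {k V : Type*} [Field k] [AddCommGroup V] [Module k V]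
    [FiniteDimensional k V]
    (B : V →ₗ[k] V →ₗ[k] k)
    (hsymm : ∀ x y, B x y = B y x)
    (hnd : ∀ x, (∀ y, B x y = 0) → x = 0)
    (H M : Submodule k V) (hcompl : IsCompl H M)
    (horth : ∀ h ∈ H, ∀ m ∈ M, B h m = 0)
    (T : V →ₗ[k] V)
    (hskew : ∀ x y, B (T x) y = - B x (T y))
    (hTH : ∀ h ∈ H, T h ∈ M) (hTM : ∀ m ∈ M, T m ∈ H) :
    2 * (Module.finrank k ↥(LinearMap.ker T ⊓ H) : ℤ)
      = (Module.finrank k ↥(LinearMap.ker T) : ℤ)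
        + (Module.finrank k ↥H : ℤ) - (Module.finrank k ↥M : ℤ) := by
  have hB : B.Nondegenerate :=
    (isSymm_def.mpr hsymm).isRefl.nondegenerate_iff_separatingLeft.mpr hnd
  have hTadj : LinearMap.IsAdjointPair B B T (-T : V →ₗ[k] V) := fun x y => by simp [hskew]
  have horthT : LinearMap.BilinForm.orthogonal B (H.map T) = H ⊔ (LinearMap.ker T ⊓ M) := by
    rw [orthogonal_map_eq_comap_orthogonal hTadj, orthogonal_eq_of_isCompl hB hcompl horth,
      comap_neg, comap_eq_sup_ker_inf_of_isCompl hcompl hTH hTM]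
  have hcodim := finrank_orthogonal hB (H.map T)
  rw [horthT, finrank_sup_of_disjoint (hcompl.disjoint.mono_right inf_le_right)] at hcodim
  have hnullity := finrank_map_add_finrank_ker_inf T H
  have hker : finrank k ↥(LinearMap.ker T)
      = finrank k ↥(LinearMap.ker T ⊓ H) + finrank k ↥(LinearMap.ker T ⊓ M) := by
    conv_lhs => rw [ker_eq_inf_sup_inf_of_isCompl hcompl hTH hTM]
    exact finrank_sup_of_disjoint (hcompl.disjoint.mono inf_le_right inf_le_right)
  have hsum := finrank_add_eq_of_isCompl hcompl
  have hle := finrank_le (H.map T)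
  omega

/-- Kostant–Rallis dimension formula: for a skew-adjoint operator exchanging
the two summands of an orthogonal direct sum decomposition,
dim(ker T ∩ H) = ½(dim ker T + dim H − dim M). -/
theorem stmt_13 {k V : Type*} [Field k] [AddCommGroup V] [Module k V]
    [FiniteDimensional k V]
    (htwo : (2 : k) ≠ 0)
    (B : V →ₗ[k] V →ₗ[k] k)
    (hsymm : ∀ x y, B x y = B y x)
    (hnd : ∀ x, (∀ y, B x y = 0) → x = 0)
    (H M : Submodule k V) (hcompl : IsCompl H M)
    (horth : ∀ h ∈ H, ∀ m ∈ M, B h m = 0)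
    (T : V →ₗ[k] V)
    (hskew : ∀ x y, B (T x) y = - B x (T y))
    (hTH : ∀ h ∈ H, T h ∈ M) (hTM : ∀ m ∈ M, T m ∈ H) :
    2 * (Module.finrank k ↥(LinearMap.ker T ⊓ H) : ℤ)
      = (Module.finrank k ↥(LinearMap.ker T) : ℤ)
        + (Module.finrank k ↥H : ℤ) - (Module.finrank k ↥M : ℤ) :=
  stmt_13_general B hsymm hnd H M hcompl horth T hskew hTH hTM
end
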